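/- arXiv:1211.6313 — 2 statements merged into one kernel-verified Lean document; each statement's English description precedes it below -/
import Mathlib

section
/- Let U(t,x) = A(t)(R(t)² − x²)^α on {|x| < R(t)}, where R(t) = R₀ + t with R₀ > 0, α > 0, and A : [0,∞) → (0,∞) is C¹ with A'(t) ≥ 0. Then U is a (classical) supersolution of u_t = (u u_x/√(u²+u_x²))_x on the open set {(t,x) : |x| < R(t)}, i.e. U_t ≥ ∂_x( U U_x/√(U²+U_x²) ) pointwise there. -/
/-!
With `P = R² - x²` and `Q = (P² + 4α²x²)^{1/2}`, the flux of `U` is `-2Aα x P^α / Q` (the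
positive factor `A` scales out of the flux), and its `x`-derivative is
`-2Aα P^{α-1} (P² (R² + x²) / Q³ - 2αx² / Q)`. As `Q ≥ 2α|x|`, this is at most
`2Aα P^{α-1} |x| < 2AαR P^{α-1}`, the part of `U_t` produced by the unit speed `R' = 1` of the
support; the remaining part `A' P^α` of `U_t` is nonnegative.
-/

open Real Filter Topology

noncomputable def relativisticFlux (u : ℝ → ℝ) (y : ℝ) : ℝ :=
  u y * deriv u y / √(u y ^ 2 + deriv u y ^ 2)

lemma relativisticFlux_const_mul (u : ℝ → ℝ) {a : ℝ} (ha : 0 < a) (y : ℝ) :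
    relativisticFlux (fun z => a * u z) y = a * relativisticFlux u y := by
  have hsq : (a * u y) ^ 2 + (a * deriv u y) ^ 2 = a ^ 2 * (u y ^ 2 + deriv u y ^ 2) := by ring
  simp only [relativisticFlux, deriv_const_mul_field, hsq, sqrt_mul (sq_nonneg a), sqrt_sq ha.le]
  rw [mul_mul_mul_comm, mul_assoc, mul_div_mul_left _ _ ha.ne', mul_div_assoc]

lemma rpow_eq_rpow_sub_one_mul {P : ℝ} (hP : 0 < P) (α : ℝ) : P ^ α = P ^ (α - 1) * P := by
  rw [← rpow_add_one hP.ne', sub_add_cancel]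

section Profile

variable (R α : ℝ)

lemma hasDerivAt_sq_sub_rpow {y : ℝ} (hy : y ^ 2 < R ^ 2) :
    HasDerivAt (fun z => (R ^ 2 - z ^ 2) ^ α) (-(2 * α * y) * (R ^ 2 - y ^ 2) ^ (α - 1)) y := by
  have h := ((hasDerivAt_pow 2 y).const_sub (R ^ 2)).rpow_const (p := α) (Or.inl (sub_pos.2 hy).ne')
  convert h using 1
  push_cast; ring

noncomputable def fluxProfile (y : ℝ) : ℝ :=
  y * (R ^ 2 - y ^ 2) ^ α / √((R ^ 2 - y ^ 2) ^ 2 + (2 * α * y) ^ 2)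

noncomputable def fluxProfileDeriv (x : ℝ) : ℝ :=
  (R ^ 2 - x ^ 2) ^ (α - 1) *
    ((R ^ 2 - x ^ 2) ^ 2 * (R ^ 2 + x ^ 2) / √((R ^ 2 - x ^ 2) ^ 2 + (2 * α * x) ^ 2) ^ 3
      - 2 * α * x ^ 2 / √((R ^ 2 - x ^ 2) ^ 2 + (2 * α * x) ^ 2))

lemma relativisticFlux_sq_sub_rpow {y : ℝ} (hy : y ^ 2 < R ^ 2) :
    relativisticFlux (fun z => (R ^ 2 - z ^ 2) ^ α) y = -(2 * α) * fluxProfile R α y := by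
  have hP : 0 < R ^ 2 - y ^ 2 := sub_pos.2 hy
  have hc : 0 < (R ^ 2 - y ^ 2) ^ (α - 1) := rpow_pos_of_pos hP _
  have hQ : 0 < √((R ^ 2 - y ^ 2) ^ 2 + (2 * α * y) ^ 2) := sqrt_pos.2 (by positivity)
  have hsq : ((R ^ 2 - y ^ 2) ^ α) ^ 2 + (-(2 * α * y) * (R ^ 2 - y ^ 2) ^ (α - 1)) ^ 2
      = ((R ^ 2 - y ^ 2) ^ (α - 1)) ^ 2 * ((R ^ 2 - y ^ 2) ^ 2 + (2 * α * y) ^ 2) := by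
    rw [rpow_eq_rpow_sub_one_mul hP]; ring
  rw [relativisticFlux, (hasDerivAt_sq_sub_rpow R α hy).deriv, hsq, sqrt_mul (sq_nonneg _),
    sqrt_sq hc.le, fluxProfile, rpow_eq_rpow_sub_one_mul hP]
  field_simp

lemma hasDerivAt_fluxProfile {x : ℝ} (hx : x ^ 2 < R ^ 2) :
    HasDerivAt (fluxProfile R α) (fluxProfileDeriv R α x) x := by
  have hP : 0 < R ^ 2 - x ^ 2 := sub_pos.2 hx
  have hS : 0 < (R ^ 2 - x ^ 2) ^ 2 + (2 * α * x) ^ 2 := by positivity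
  have hQ : 0 < √((R ^ 2 - x ^ 2) ^ 2 + (2 * α * x) ^ 2) := sqrt_pos.2 hS
  have hQ2 := sq_sqrt hS.le
  have hP' : HasDerivAt (fun y => R ^ 2 - y ^ 2) (-(2 * x)) x := by
    simpa using (hasDerivAt_pow 2 x).const_sub (R ^ 2)
  have hnum := (hasDerivAt_id' x).fun_mul (hasDerivAt_sq_sub_rpow R α hx)
  have hden :=
    ((hP'.fun_pow 2).fun_add (((hasDerivAt_id' x).const_mul (2 * α)).fun_pow 2)).sqrt hS.ne'
  refine (hnum.fun_div hden hQ.ne').congr_deriv ?_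
  rw [fluxProfileDeriv, rpow_eq_rpow_sub_one_mul hP α]
  generalize √((R ^ 2 - x ^ 2) ^ 2 + (2 * α * x) ^ 2) = Q at hQ hQ2 ⊢
  field_simp
  linear_combination (R ^ 2 - x ^ 2) * hQ2

lemma deriv_relativisticFlux_const_mul_sq_sub_rpow {a x : ℝ} (ha : 0 < a) (hx : x ^ 2 < R ^ 2) :
    deriv (relativisticFlux fun y => a * (R ^ 2 - y ^ 2) ^ α) x
      = -(2 * a * α) * fluxProfileDeriv R α x := by
  have hball : ∀ᶠ y in 𝓝 x, y ^ 2 < R ^ 2 :=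
    (isOpen_lt (continuous_pow 2) continuous_const).mem_nhds hx
  have hflux : (relativisticFlux fun y => a * (R ^ 2 - y ^ 2) ^ α)
      =ᶠ[𝓝 x] fun y => -(2 * a * α) * fluxProfile R α y := by
    filter_upwards [hball] with y hy
    rw [relativisticFlux_const_mul _ ha, relativisticFlux_sq_sub_rpow R α hy]
    ring
  rw [hflux.deriv_eq, ((hasDerivAt_fluxProfile R α hx).const_mul _).deriv]

lemma neg_fluxProfileDeriv_le {x : ℝ} (hα : 0 ≤ α) (hx : |x| < R) :
    -fluxProfileDeriv R α x ≤ R * (R ^ 2 - x ^ 2) ^ (α - 1) := by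
  set Q := √((R ^ 2 - x ^ 2) ^ 2 + (2 * α * x) ^ 2)
  have hQ : 2 * α * |x| ≤ Q := by
    calc 2 * α * |x| = √((2 * α * x) ^ 2) := by
          rw [sqrt_sq_eq_abs, abs_mul, abs_of_nonneg (by positivity : 0 ≤ 2 * α)]
      _ ≤ Q := sqrt_le_sqrt (le_add_of_nonneg_left (sq_nonneg _))
  have hradial : 2 * α * x ^ 2 / Q ≤ |x| := by
    refine div_le_of_le_mul₀ (sqrt_nonneg _) (abs_nonneg x) ?_
    calc 2 * α * x ^ 2 = |x| * (2 * α * |x|) := by rw [← sq_abs x]; ring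
      _ ≤ |x| * Q := mul_le_mul_of_nonneg_left hQ (abs_nonneg x)
  have hrest : 0 ≤ (R ^ 2 - x ^ 2) ^ 2 * (R ^ 2 + x ^ 2) / Q ^ 3 := by positivity
  have hP : 0 < R ^ 2 - x ^ 2 := sub_pos.2 (sq_lt_sq' (abs_lt.1 hx).1 (abs_lt.1 hx).2)
  rw [fluxProfileDeriv, ← mul_neg, mul_comm R]
  exact mul_le_mul_of_nonneg_left (by linarith) (rpow_nonneg hP.le _)

end Profile

lemma hasDerivAt_mul_add_sq_sub_rpow {A : ℝ → ℝ} {R₀ α t x : ℝ} (hA : DifferentiableAt ℝ A t)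
    (hx : x ^ 2 < (R₀ + t) ^ 2) :
    HasDerivAt (fun s => A s * ((R₀ + s) ^ 2 - x ^ 2) ^ α)
      (deriv A t * ((R₀ + t) ^ 2 - x ^ 2) ^ α
        + A t * (2 * α * (R₀ + t) * ((R₀ + t) ^ 2 - x ^ 2) ^ (α - 1))) t := by
  have hR : HasDerivAt (fun s => (R₀ + s) ^ 2 - x ^ 2) (2 * (R₀ + t)) t := by
    simpa using (((hasDerivAt_id' t).const_add R₀).fun_pow 2).sub_const (x ^ 2)
  exact (hA.hasDerivAt.fun_mul (hR.rpow_const (Or.inl (sub_pos.2 hx).ne'))).congr_deriv (by ring)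

theorem supersolution_RHE_general (R₀ α : ℝ) (hα : 0 < α)
    (A : ℝ → ℝ) (hA : ContDiff ℝ 1 A) (hApos : ∀ t, 0 < A t)
    (hA' : ∀ t, 0 ≤ deriv A t)
    (U : ℝ → ℝ → ℝ)
    (hU : U = fun t x => A t * ((R₀ + t) ^ 2 - x ^ 2) ^ α) :
    ∀ t x : ℝ, 0 ≤ t → |x| < R₀ + t →
      deriv (fun s => U s x) t ≥
        deriv (fun y => U t y * deriv (U t) y /
          Real.sqrt ((U t y) ^ 2 + (deriv (U t) y) ^ 2)) x := by
  intro t x _ hx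
  subst hU
  have hxR : x ^ 2 < (R₀ + t) ^ 2 := sq_lt_sq' (abs_lt.1 hx).1 (abs_lt.1 hx).2
  have hP : 0 < (R₀ + t) ^ 2 - x ^ 2 := sub_pos.2 hxR
  have htime := hasDerivAt_mul_add_sq_sub_rpow (α := α) (hA.differentiable one_ne_zero t) hxR
  change _ ≥ deriv (relativisticFlux fun y => A t * ((R₀ + t) ^ 2 - y ^ 2) ^ α) x
  rw [htime.deriv, deriv_relativisticFlux_const_mul_sq_sub_rpow _ _ (hApos t) hxR]
  have hflux := mul_le_mul_of_nonneg_left (neg_fluxProfileDeriv_le (R₀ + t) α hα.le hx)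
    (by have := hApos t; positivity : 0 ≤ 2 * A t * α)
  have hgrowth : 0 ≤ deriv A t * ((R₀ + t) ^ 2 - x ^ 2) ^ α :=
    mul_nonneg (hA' t) (rpow_nonneg hP.le _)
  linear_combination hgrowth + hflux

/-- `U(t,x) = A(t)(R(t)²−x²)^α`, with `R(t) = R₀+t`, `A' ≥ 0`, is a classical
supersolution of the relativistic heat equation `u_t = (u u_x/√(u²+u_x²))_x`
on `{(t,x) : |x| < R₀+t}`. -/
theorem supersolution_RHE (R₀ α : ℝ) (hR₀ : 0 < R₀) (hα : 0 < α)
    (A : ℝ → ℝ) (hA : ContDiff ℝ 1 A) (hApos : ∀ t, 0 < A t)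
    (hA' : ∀ t, 0 ≤ deriv A t)
    (U : ℝ → ℝ → ℝ)
    (hU : U = fun t x => A t * ((R₀ + t) ^ 2 - x ^ 2) ^ α) :
    ∀ t x : ℝ, 0 ≤ t → |x| < R₀ + t →
      deriv (fun s => U s x) t ≥
        deriv (fun y => U t y * deriv (U t) y /
          Real.sqrt ((U t y) ^ 2 + (deriv (U t) y) ^ 2)) x :=
  supersolution_RHE_general R₀ α hα A hA hApos hA' U hU
end

section
/- Let u : [0,T] × ℝ → ℝ be smooth and positive on its support, and let φ(t,η) be defined by ∫_{a−t}^{φ(t,η)} u(t,x)dx = η for η ∈ (0,1). Assume u satisfies u_t = (u u_x/√(u²+u_x²))_x with the vertical-contact boundary conditions u_x/√(u²+u_x²) = 1 at x = a−t and = −1 at x = b+t. Then φ satisfies φ_t = φ_{ηη}/√((φ_η)⁴ + (φ_{ηη})²). -/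
open Real

set_option maxHeartbeats 2000000

/-- The pseudo-inverse `φ` of the distribution function of a smooth positive
solution of the relativistic heat equation satisfies
`φ_t = φ_{ηη}/√((φ_η)⁴+(φ_{ηη})²)`. -/
theorem inverse_distribution_equation (a b T : ℝ) (hab : a < b) (hT : 0 < T)
    (u φ : ℝ → ℝ → ℝ)
    (husmooth : ContDiff ℝ (⊤ : ℕ∞) (fun p : ℝ × ℝ => u p.1 p.2))
    (hφsmooth : ContDiff ℝ (⊤ : ℕ∞) (fun p : ℝ × ℝ => φ p.1 p.2))
    (hupos : ∀ t ∈ Set.Ioo (0 : ℝ) T, ∀ x ∈ Set.Ioo (a - t) (b + t), 0 < u t x)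
    (hdef : ∀ t ∈ Set.Ioo (0 : ℝ) T, ∀ η ∈ Set.Ioo (0 : ℝ) 1,
      (∫ x in (a - t)..(φ t η), u t x) = η)
    (hrange : ∀ t ∈ Set.Ioo (0 : ℝ) T, ∀ η ∈ Set.Ioo (0 : ℝ) 1,
      φ t η ∈ Set.Ioo (a - t) (b + t))
    (hpde : ∀ t ∈ Set.Ioo (0 : ℝ) T, ∀ x ∈ Set.Ioo (a - t) (b + t),
      deriv (fun s => u s x) t
        = deriv (fun y => u t y * deriv (u t) y /
            Real.sqrt ((u t y) ^ 2 + (deriv (u t) y) ^ 2)) x)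
    (hbcl : ∀ t ∈ Set.Ioo (0 : ℝ) T,
      deriv (u t) (a - t) / Real.sqrt ((u t (a - t)) ^ 2 + (deriv (u t) (a - t)) ^ 2) = 1)
    (hbcr : ∀ t ∈ Set.Ioo (0 : ℝ) T,
      deriv (u t) (b + t) / Real.sqrt ((u t (b + t)) ^ 2 + (deriv (u t) (b + t)) ^ 2) = -1) :
    ∀ t ∈ Set.Ioo (0 : ℝ) T, ∀ η ∈ Set.Ioo (0 : ℝ) 1,
      deriv (fun s => φ s η) t
        = deriv (deriv (φ t)) η /
            Real.sqrt ((deriv (φ t) η) ^ 4 + (deriv (deriv (φ t)) η) ^ 2) := by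
  intro t ht η hη
  -- notation
  set up : ℝ × ℝ → ℝ := fun p => u p.1 p.2 with hup_def
  set φp : ℝ × ℝ → ℝ := fun p => φ p.1 p.2 with hφp_def
  have huD : Differentiable ℝ up := husmooth.differentiable (by simp)
  have hφD : Differentiable ℝ φp := hφsmooth.differentiable (by simp)
  -- partial derivatives of u
  set ut : ℝ → ℝ → ℝ := fun τ x => fderiv ℝ up (τ, x) (1, 0) with hut_def
  set ux : ℝ → ℝ → ℝ := fun τ x => fderiv ℝ up (τ, x) (0, 1) with hux_def
  have hcurve : ∀ (c : ℝ → ℝ) (τ v : ℝ), HasDerivAt c v τ →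
      HasDerivAt (fun σ => u σ (c σ)) ((fderiv ℝ up (τ, c τ)) (1, v)) τ := by
    intro c τ v hc
    exact (huD (τ, c τ)).hasFDerivAt.comp_hasDerivAt τ ((hasDerivAt_id τ).prodMk hc)
  have hut_has : ∀ τ x, HasDerivAt (fun σ => u σ x) (ut τ x) τ := by
    intro τ x
    simpa using hcurve (fun _ => x) τ 0 (hasDerivAt_const τ x)
  have hux_has : ∀ τ x, HasDerivAt (u τ) (ux τ x) x := by
    intro τ x
    have : HasDerivAt (fun ξ => (τ, ξ)) ((0 : ℝ), (1 : ℝ)) x :=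
      (hasDerivAt_const x τ).prodMk (hasDerivAt_id x)
    exact (huD (τ, x)).hasFDerivAt.comp_hasDerivAt x this
  have hux_deriv : ∀ τ x, deriv (u τ) x = ux τ x := fun τ x => (hux_has τ x).deriv
  -- smoothness of u t
  have hut1 : ContDiff ℝ (⊤ : ℕ∞) (u t) := by
    have : ContDiff ℝ (⊤ : ℕ∞) (fun x : ℝ => up (t, x)) :=
      husmooth.comp (contDiff_const.prodMk contDiff_id)
    exact this
  have hutc : Continuous (u t) := hut1.continuous
  have hut1' : Differentiable ℝ (deriv (u t)) ∧ Continuous (deriv (u t)) := by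
    have h2 := (contDiff_infty_iff_deriv.mp (hut1.of_le (by simp))).2
    exact ⟨h2.differentiable (by simp), h2.continuous⟩
  -- smoothness of φ t
  have hφt1 : ContDiff ℝ (⊤ : ℕ∞) (φ t) := by
    have : ContDiff ℝ (⊤ : ℕ∞) (fun s : ℝ => φp (t, s)) :=
      hφsmooth.comp (contDiff_const.prodMk contDiff_id)
    exact this
  set p : ℝ := deriv (φ t) η with hp_def
  set q : ℝ := deriv (deriv (φ t)) η with hq_def
  have hφtη : ∀ s, HasDerivAt (φ t) (deriv (φ t) s) s :=
    fun s => ((hφt1.differentiable (by simp)) s).hasDerivAt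
  have hφtη2 : HasDerivAt (deriv (φ t)) q η :=
    (((contDiff_infty_iff_deriv.mp (hφt1.of_le (by simp))).2.differentiable (by simp)) η).hasDerivAt
  -- geometry
  have hγ := hrange t ht η hη
  set γ : ℝ := φ t η with hγ_def
  have hαγ : a - t < γ := hγ.1
  have hγb : γ < b + t := hγ.2
  -- Step A : u(φ) ⋅ φ_η = 1 on (0,1)
  have hA : ∀ η' ∈ Set.Ioo (0 : ℝ) 1, u t (φ t η') * deriv (φ t) η' = 1 := by
    intro η' hη'
    have hW : HasDerivAt (fun x => ∫ y in (a - t)..x, u t y) (u t (φ t η')) (φ t η') :=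
      intervalIntegral.integral_hasDerivAt_right (hutc.intervalIntegrable _ _)
        hutc.stronglyMeasurable.stronglyMeasurableAtFilter hutc.continuousAt
    have hcomp : HasDerivAt (fun s => ∫ y in (a - t)..(φ t s), u t y)
        (u t (φ t η') * deriv (φ t) η') η' := hW.comp η' (hφtη η')
    have hev : (fun s => ∫ y in (a - t)..(φ t s), u t y) =ᶠ[nhds η'] id := by
      filter_upwards [Ioo_mem_nhds hη'.1 hη'.2] with s hs
      exact hdef t ht s hs
    have hid : HasDerivAt (id : ℝ → ℝ) (u t (φ t η') * deriv (φ t) η') η' :=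
      hcomp.congr_of_eventuallyEq hev.symm
    have := hid.unique (hasDerivAt_id η')
    linarith
  -- Step B : second derivative relation
  have hApη : u t γ * p = 1 := hA η hη
  have hupos_γ : 0 < u t γ := hupos t ht γ hγ
  have hp_pos : 0 < p := by
    rcases lt_trichotomy p 0 with h | h | h
    · nlinarith
    · rw [h] at hApη; simp at hApη
    · exact h
  have hB : ux t γ * p * p + u t γ * q = 0 := by
    have h1 : HasDerivAt (fun s => u t (φ t s)) (ux t γ * p) η :=
      (hux_has t γ).comp η (hφtη η)
    have hg : HasDerivAt (fun s => u t (φ t s) * deriv (φ t) s)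
        (ux t γ * p * deriv (φ t) η + u t (φ t η) * q) η := h1.mul hφtη2
    have hev : (fun s => u t (φ t s) * deriv (φ t) s) =ᶠ[nhds η] fun _ => (1 : ℝ) := by
      filter_upwards [Ioo_mem_nhds hη.1 hη.2] with s hs
      exact hA s hs
    have hconst : HasDerivAt (fun _ : ℝ => (1 : ℝ))
        (ux t γ * p * deriv (φ t) η + u t (φ t η) * q) η :=
      hg.congr_of_eventuallyEq hev.symm
    have := hconst.unique (hasDerivAt_const η 1)
    rw [← hp_def, ← hγ_def] at this
    linarith
  -- boundary : u t (a - t) = 0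
  have hbc := hbcl t ht
  have hs0 : Real.sqrt ((u t (a - t)) ^ 2 + (deriv (u t) (a - t)) ^ 2) ≠ 0 := by
    intro h; rw [h, div_zero] at hbc; norm_num at hbc
  have hu0 : u t (a - t) = 0 := by
    have hsum : (0:ℝ) ≤ (u t (a - t)) ^ 2 + (deriv (u t) (a - t)) ^ 2 := by positivity
    have hd : deriv (u t) (a - t)
        = Real.sqrt ((u t (a - t)) ^ 2 + (deriv (u t) (a - t)) ^ 2) :=
      (div_eq_one_iff_eq hs0).mp hbc
    have hsq := Real.sq_sqrt hsum
    rw [← hd] at hsq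
    have hu2 : u t (a - t) ^ 2 = 0 := by nlinarith [hsq]
    exact (pow_eq_zero_iff two_ne_zero).mp hu2
  -- the flux
  set Fl : ℝ → ℝ := fun y_ => u t y_ * deriv (u t) y_ /
      Real.sqrt ((u t y_) ^ 2 + (deriv (u t) y_) ^ 2) with hFl_def
  have hFl0 : Fl (a - t) = 0 := by simp [hFl_def, hu0]
  have hsqrt_ne : ∀ x ∈ Set.Icc (a - t) γ,
      Real.sqrt ((u t x) ^ 2 + (deriv (u t) x) ^ 2) ≠ 0 := by
    intro x hx
    rcases eq_or_lt_of_le hx.1 with h | h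
    · rw [← h]; exact hs0
    · have hux0 : 0 < u t x := hupos t ht x ⟨h, lt_of_le_of_lt hx.2 hγb⟩
      positivity
  have hFl_cont : ContinuousOn Fl (Set.Icc (a - t) γ) := by
    apply ContinuousOn.div
    · exact (hutc.mul hut1'.2).continuousOn
    · exact ((hutc.pow 2).add ((hut1'.2).pow 2)).sqrt.continuousOn
    · exact hsqrt_ne
  have hFl_diff : ∀ x ∈ Set.Ioo (a - t) (b + t), HasDerivAt Fl (ut t x) x := by
    intro x hx
    have hux0 : 0 < u t x := hupos t ht x hx
    have hsq : (u t x) ^ 2 + (deriv (u t) x) ^ 2 ≠ 0 := by positivity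
    have hd1 : DifferentiableAt ℝ (u t) x := (hut1.differentiable (by simp)) x
    have hd2 : DifferentiableAt ℝ (deriv (u t)) x := hut1'.1 x
    have hdsqrt : DifferentiableAt ℝ
        (fun y_ => Real.sqrt ((u t y_) ^ 2 + (deriv (u t) y_) ^ 2)) x :=
      ((hd1.pow 2).add (hd2.pow 2)).sqrt hsq
    have hFld : DifferentiableAt ℝ Fl x := by
      apply DifferentiableAt.div ((hd1.mul hd2)) hdsqrt
      have : (0:ℝ) < Real.sqrt ((u t x) ^ 2 + (deriv (u t) x) ^ 2) :=
        Real.sqrt_pos.mpr (by positivity)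
      exact ne_of_gt this
    have := hFld.hasDerivAt
    have heq : deriv Fl x = ut t x := by
      have h1 := hpde t ht x hx
      have h2 : deriv (fun s => u s x) t = ut t x := (hut_has t x).deriv
      rw [h2] at h1
      exact h1.symm
    rwa [heq] at this
  -- time-direction setup
  set dΦ : ℝ → ℝ := fun τ => fderiv ℝ φp (τ, η) (1, 0) with hdΦ_def
  have hΦ : ∀ τ, HasDerivAt (fun σ => φ σ η) (dΦ τ) τ := by
    intro τ
    exact (hφD (τ, η)).hasFDerivAt.comp_hasDerivAt τ
      ((hasDerivAt_id τ).prodMk (hasDerivAt_const τ η))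
  set r : ℝ → ℝ := fun τ => φ τ η - a + τ with hr_def
  have hrpos : ∀ τ ∈ Set.Ioo (0:ℝ) T, 0 < r τ := by
    intro τ hτ
    have := (hrange τ hτ η hη).1
    simp only [hr_def]; linarith
  have hr_has : ∀ τ, HasDerivAt r (dΦ τ + 1) τ := by
    intro τ
    exact (((hΦ τ).sub_const a).add (hasDerivAt_id τ))
  set y : ℝ → ℝ → ℝ := fun τ s => r τ * s + (a - τ) with hy_def
  set dy : ℝ → ℝ → ℝ := fun τ s => (dΦ τ + 1) * s + (-1) with hdy_def
  have hy_has : ∀ s τ, HasDerivAt (fun σ => y σ s) (dy τ s) τ := by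
    intro s τ
    have h1 : HasDerivAt (fun σ => r σ * s) ((dΦ τ + 1) * s) τ := (hr_has τ).mul_const s
    have h2 : HasDerivAt (fun σ => a - σ) (-1 : ℝ) τ := by
      simpa using (hasDerivAt_id τ).const_sub a
    exact h1.add h2
  set F : ℝ → ℝ → ℝ := fun τ s => u τ (y τ s) with hF_def
  set w : ℝ → ℝ → ℝ := fun τ s => (fderiv ℝ up (τ, y τ s)) (1, dy τ s) with hw_def
  have hF_has : ∀ s τ, HasDerivAt (fun σ => F σ s) (w τ s) τ := by
    intro s τ
    exact hcurve (fun σ => y σ s) τ (dy τ s) (hy_has s τ)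
  have hw_eq : ∀ τ s, w τ s = ut τ (y τ s) + dy τ s * ux τ (y τ s) := by
    intro τ s
    have hvec : ((1 : ℝ), dy τ s) = ((1:ℝ), (0:ℝ)) + dy τ s • ((0:ℝ), (1:ℝ)) := by
      simp [Prod.ext_iff]
    simp only [hw_def, hut_def, hux_def, hvec, map_add, map_smul, smul_eq_mul]
  -- continuity facts
  have hΦcont : Continuous (fun τ => φ τ η) :=
    hφsmooth.continuous.comp (continuous_id.prodMk continuous_const)
  have hdΦcont : Continuous dΦ := by
    have h1 : Continuous (fun τ => fderiv ℝ φp (τ, η)) :=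
      (hφsmooth.continuous_fderiv (by simp)).comp (continuous_id.prodMk continuous_const)
    exact h1.clm_apply continuous_const
  have hrcont : Continuous r := by
    simp only [hr_def]; exact (hΦcont.sub continuous_const).add continuous_id
  have hycont : Continuous (fun z : ℝ × ℝ => y z.1 z.2) := by
    simp only [hy_def]
    exact ((hrcont.comp continuous_fst).mul continuous_snd).add
      ((continuous_const.sub continuous_fst))
  have hdycont : Continuous (fun z : ℝ × ℝ => dy z.1 z.2) := by
    simp only [hdy_def]
    exact (((hdΦcont.comp continuous_fst).add continuous_const).mul continuous_snd).add
      continuous_const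
  have hwcont : Continuous (fun z : ℝ × ℝ => w z.1 z.2) := by
    have h1 : Continuous (fun z : ℝ × ℝ => fderiv ℝ up (z.1, y z.1 z.2)) :=
      (husmooth.continuous_fderiv (by simp)).comp (continuous_fst.prodMk hycont)
    exact h1.clm_apply (continuous_const.prodMk hdycont)
  have hFcont : Continuous (fun z : ℝ × ℝ => F z.1 z.2) :=
    husmooth.continuous.comp (continuous_fst.prodMk hycont)
  -- derivative of the parametric integral
  set I : ℝ → ℝ := fun τ => ∫ s in (0:ℝ)..1, F τ s with hI_def
  obtain ⟨C, hC⟩ := ((isCompact_closedBall t 1).prod isCompact_Icc).exists_bound_of_continuousOn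
    (s := Metric.closedBall t 1 ×ˢ Set.Icc (0:ℝ) 1) hwcont.continuousOn
  have hI_has : HasDerivAt I (∫ s in (0:ℝ)..1, w t s) t := by
    refine (intervalIntegral.hasDerivAt_integral_of_dominated_loc_of_deriv_le
      (F := F) (F' := w) (bound := fun _ => C) (Metric.ball_mem_nhds t one_pos) ?_ ?_ ?_ ?_ ?_ ?_).2
    · filter_upwards with τ
      exact ((husmooth.continuous.comp
        ((continuous_const.prodMk continuous_id).comp
          (hycont.comp (continuous_const.prodMk continuous_id)))).aestronglyMeasurable : _)
    · exact (hFcont.comp (continuous_const.prodMk continuous_id)).intervalIntegrable 0 1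
    · exact ((hwcont.comp (continuous_const.prodMk continuous_id)).aestronglyMeasurable : _)
    · filter_upwards with s hs τ hτ
      have : (τ, s) ∈ Metric.closedBall t 1 ×ˢ Set.Icc (0:ℝ) 1 := by
        constructor
        · exact Metric.ball_subset_closedBall hτ
        · rcases Set.uIoc_of_le (by norm_num : (0:ℝ) ≤ 1) ▸ hs with ⟨h1, h2⟩
          exact ⟨le_of_lt h1, h2⟩
      exact hC _ this
    · exact intervalIntegrable_const
    · filter_upwards with s hs τ hτ
      exact hF_has s τ
  -- the constant identity
  have hDconst : (fun τ => r τ * I τ) =ᶠ[nhds t] fun _ => η := by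
    filter_upwards [Ioo_mem_nhds ht.1 ht.2] with τ hτ
    have hrτ : r τ ≠ 0 := ne_of_gt (hrpos τ hτ)
    have hcov : I τ = (r τ)⁻¹ • ∫ x in (r τ * 0 + (a - τ))..(r τ * 1 + (a - τ)), u τ x := by
      simp only [hI_def, hF_def, hy_def]
      exact intervalIntegral.integral_comp_mul_add (f := u τ) hrτ (a - τ)
    have he1 : r τ * 0 + (a - τ) = a - τ := by ring
    have he2 : r τ * 1 + (a - τ) = φ τ η := by simp only [hr_def]; ring
    rw [hcov, he1, he2, hdef τ hτ η hη]
    simp [smul_eq_mul]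
    field_simp
  have hD_has : HasDerivAt (fun τ => r τ * I τ)
      ((dΦ t + 1) * I t + r t * ∫ s in (0:ℝ)..1, w t s) t := (hr_has t).mul hI_has
  have hD_zero : (dΦ t + 1) * I t + r t * (∫ s in (0:ℝ)..1, w t s) = 0 := by
    have h1 : HasDerivAt (fun _ : ℝ => η)
        ((dΦ t + 1) * I t + r t * ∫ s in (0:ℝ)..1, w t s) t :=
      hD_has.congr_of_eventuallyEq hDconst.symm
    exact h1.unique (hasDerivAt_const t η)
  -- evaluate the integral of w t
  have hrt : 0 < r t := hrpos t ht
  have hY_mem : ∀ s ∈ Set.Icc (0:ℝ) 1, y t s ∈ Set.Icc (a - t) γ := by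
    intro s hs
    constructor
    · simp only [hy_def]; nlinarith [hs.1, hrt]
    · simp only [hy_def, hr_def, hγ_def]; nlinarith [hs.2, hrt]
  have hY_mem_o : ∀ s ∈ Set.Ioo (0:ℝ) 1, y t s ∈ Set.Ioo (a - t) γ := by
    intro s hs
    constructor
    · simp only [hy_def]; nlinarith [hs.1, hrt]
    · simp only [hy_def, hr_def, hγ_def]; nlinarith [hs.2, hrt]
  have hY_has : ∀ s : ℝ, HasDerivAt (fun σ => y t σ) (r t) s := by
    intro s
    simp only [hy_def]
    simpa using ((hasDerivAt_id s).const_mul (r t)).add_const (a - t)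
  have hY0 : y t 0 = a - t := by simp [hy_def]
  have hY1 : y t 1 = γ := by simp only [hy_def, hr_def, hγ_def]; ring
  -- J1 : ∫ ut(y) * r = Fl γ
  have hJ1 : (∫ s in (0:ℝ)..1, ut t (y t s) * r t) = Fl γ := by
    have := intervalIntegral.integral_eq_sub_of_hasDeriv_right_of_le (f := fun s => Fl (y t s))
      (f' := fun s => ut t (y t s) * r t) (by norm_num : (0:ℝ) ≤ 1)
      (hFl_cont.comp (hycont.comp (continuous_const.prodMk continuous_id)).continuousOn
        (fun s hs => hY_mem s hs))
      (fun s hs => by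
        have hmem : y t s ∈ Set.Ioo (a - t) (b + t) := by
          have := hY_mem_o s hs; exact ⟨this.1, lt_trans this.2 hγb⟩
        exact ((hFl_diff (y t s) hmem).comp s (hY_has s)).hasDerivWithinAt)
      (by
        apply Continuous.intervalIntegrable
        have : Continuous (fun s : ℝ => ut t (y t s)) := by
          have h1 : Continuous (fun x : ℝ => fderiv ℝ up (t, x)) :=
            (husmooth.continuous_fderiv (by simp)).comp (continuous_const.prodMk continuous_id)
          exact (h1.comp (hycont.comp (continuous_const.prodMk continuous_id))).clm_apply
            continuous_const
        exact this.mul continuous_const)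
    rw [this]; simp only [hY0, hY1, hFl0, sub_zero]
  -- J2 : ∫ ux(y) * r = u t γ
  have hux_cont : Continuous (fun x : ℝ => ux t x) := by
    have h1 : Continuous (fun x : ℝ => fderiv ℝ up (t, x)) :=
      (husmooth.continuous_fderiv (by simp)).comp (continuous_const.prodMk continuous_id)
    exact h1.clm_apply continuous_const
  have hJ2 : (∫ s in (0:ℝ)..1, ux t (y t s) * r t) = u t γ := by
    have := intervalIntegral.integral_eq_sub_of_hasDerivAt (a := (0:ℝ)) (b := 1) (f := fun s => u t (y t s))
      (f' := fun s => ux t (y t s) * r t)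
      (fun s _ => (hux_has t (y t s)).comp s (hY_has s))
      (by
        apply Continuous.intervalIntegrable
        exact (hux_cont.comp (hycont.comp (continuous_const.prodMk continuous_id))).mul
          continuous_const)
    rw [this]; simp only [hY0, hY1, hu0, sub_zero]
  -- J3 : ∫ s * (ux(y) * r) = u t γ - I t
  have hJ3 : (∫ s in (0:ℝ)..1, s * (ux t (y t s) * r t)) = u t γ - I t := by
    have := intervalIntegral.integral_mul_deriv_eq_deriv_mul
      (a := (0:ℝ)) (b := 1) (u := fun s : ℝ => s) (v := fun s => u t (y t s))
      (u' := fun _ : ℝ => (1:ℝ)) (v' := fun s => ux t (y t s) * r t)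
      (fun s _ => hasDerivAt_id s)
      (fun s _ => (hux_has t (y t s)).comp s (hY_has s))
      intervalIntegrable_const
      (by
        apply Continuous.intervalIntegrable
        exact (hux_cont.comp (hycont.comp (continuous_const.prodMk continuous_id))).mul
          continuous_const)
    rw [this]
    simp only [hY0, hY1, one_mul, zero_mul, sub_zero]
    rfl
  -- combine : r t * ∫ w = Fl γ - u t γ + (dΦ t + 1) * (u t γ - I t)
  have hJcomb : r t * (∫ s in (0:ℝ)..1, w t s)
      = Fl γ - u t γ + (dΦ t + 1) * (u t γ - I t) := by
    have hint1 : IntervalIntegrable (fun s => ut t (y t s) * r t) MeasureTheory.volume 0 1 := by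
      apply Continuous.intervalIntegrable
      have h1 : Continuous (fun x : ℝ => fderiv ℝ up (t, x)) :=
        (husmooth.continuous_fderiv (by simp)).comp (continuous_const.prodMk continuous_id)
      exact ((h1.comp (hycont.comp (continuous_const.prodMk continuous_id))).clm_apply
        continuous_const).mul continuous_const
    have hint2 : IntervalIntegrable (fun s => ux t (y t s) * r t) MeasureTheory.volume 0 1 := by
      apply Continuous.intervalIntegrable
      exact (hux_cont.comp (hycont.comp (continuous_const.prodMk continuous_id))).mul
        continuous_const
    have hint3 : IntervalIntegrable (fun s => s * (ux t (y t s) * r t))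
        MeasureTheory.volume 0 1 := by
      apply Continuous.intervalIntegrable
      exact continuous_id.mul ((hux_cont.comp
        (hycont.comp (continuous_const.prodMk continuous_id))).mul continuous_const)
    have hwexp : ∀ s : ℝ, r t * w t s
        = ut t (y t s) * r t - ux t (y t s) * r t + (dΦ t + 1) * (s * (ux t (y t s) * r t)) := by
      intro s
      rw [hw_eq t s]
      simp only [hdy_def]
      ring
    have : r t * (∫ s in (0:ℝ)..1, w t s) = ∫ s in (0:ℝ)..1, r t * w t s := by
      rw [← intervalIntegral.integral_const_mul]
    rw [this]
    have heq : (∫ s in (0:ℝ)..1, r t * w t s)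
        = ∫ s in (0:ℝ)..1, (ut t (y t s) * r t - ux t (y t s) * r t
            + (dΦ t + 1) * (s * (ux t (y t s) * r t))) := by
      apply intervalIntegral.integral_congr
      intro s _
      exact hwexp s
    rw [heq]
    rw [intervalIntegral.integral_add ((hint1.sub hint2)) (hint3.const_mul _),
      intervalIntegral.integral_sub hint1 hint2, intervalIntegral.integral_const_mul,
      hJ1, hJ2, hJ3]
  -- key identity : Fl γ + dΦ t * u t γ = 0
  have hkey : Fl γ + dΦ t * u t γ = 0 := by
    have h := hD_zero
    rw [hJcomb] at h
    ring_nf at h ⊢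
    linarith
  -- final algebra
  have hXdef : deriv (u t) γ = ux t γ := hux_deriv t γ
  set U : ℝ := u t γ with hU_def
  set X : ℝ := deriv (u t) γ with hX_def
  have hS_pos : 0 < Real.sqrt (U ^ 2 + X ^ 2) := Real.sqrt_pos.mpr (by positivity)
  have hdΦval : dΦ t = -X / Real.sqrt (U ^ 2 + X ^ 2) := by
    have hFlγ : Fl γ = U * X / Real.sqrt (U ^ 2 + X ^ 2) := rfl
    rw [hFlγ] at hkey
    have hU_ne : U ≠ 0 := ne_of_gt hupos_γ
    field_simp at hkey ⊢
    nlinarith [hkey, hS_pos]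
  have hXval : X = -q / p ^ 3 := by
    rw [hXdef]
    have hU1 : U = 1 / p := by
      rw [hU_def]; field_simp; linarith [hApη]
    have : ux t γ * p * p + U * q = 0 := hB
    rw [hU1] at this
    field_simp at this ⊢
    nlinarith [this]
  have hgoal_lhs : deriv (fun s => φ s η) t = dΦ t := (hΦ t).deriv
  rw [hgoal_lhs, hdΦval, hXval]
  have hUval : U = 1 / p := by
    rw [hU_def]; field_simp; linarith [hApη]
  rw [hUval]
  have hsum_eq : (1 / p) ^ 2 + (-q / p ^ 3) ^ 2 = (p ^ 4 + q ^ 2) / p ^ 6 := by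
    field_simp
  rw [hsum_eq]
  have hp3 : (0:ℝ) < p ^ 3 := by positivity
  have hsqrt_div : Real.sqrt ((p ^ 4 + q ^ 2) / p ^ 6)
      = Real.sqrt (p ^ 4 + q ^ 2) / p ^ 3 := by
    rw [Real.sqrt_div (by positivity) (p ^ 6),
      show (p:ℝ) ^ 6 = (p ^ 3) ^ 2 by ring, Real.sqrt_sq (le_of_lt hp3)]
  rw [hsqrt_div]
  have hsqpos : (0:ℝ) < Real.sqrt (p ^ 4 + q ^ 2) := Real.sqrt_pos.mpr (by positivity)
  field_simp
end
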